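/- arXiv:2107.02166 — 2 statements merged into one kernel-verified Lean document; each statement's English description precedes it below -/
import Mathlib

section
/- Let X = [0,1] and α(x) = 2x for x ∈ [0,1/2], α(x) = 1 for x ∈ [1/2,1]. Then the only ergodic α-invariant Borel probability measures are the Dirac measures δ_0 and δ_1, hence the essential set is X_α = {0,1}, and α⁻¹(X_α) = {0} ∪ [1/2,1] ≠ X_α. -/
open MeasureTheory

noncomputable section

/-- The unit interval `[0,1]` as a subtype of `ℝ`. -/
abbrev unitI : Set ℝ := Set.Icc 0 1

/-- The map `α(x) = 2x` for `x ∈ [0,1/2]` and `α(x) = 1` for `x ∈ [1/2,1]`,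
written as `α(x) = min (2x) 1`. -/
def tentMap : unitI → unitI := fun x =>
  ⟨min (2 * x.1) 1, ⟨le_min (by nlinarith [x.2.1]) zero_le_one, min_le_right _ _⟩⟩

/-- The essential set: points all of whose open neighborhoods have positive
measure for some `α`-invariant Borel probability measure. -/
def essentialSet {X : Type*} [TopologicalSpace X] [MeasurableSpace X] (α : X → X) : Set X :=
  {x : X | ∀ V : Set X, IsOpen V → x ∈ V →
    ∃ μ : Measure X, IsProbabilityMeasure μ ∧ μ.map α = μ ∧ 0 < μ V}

/-- The point `0` of the unit interval. -/
def pt0 : unitI := ⟨0, by norm_num⟩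

/-- The point `1` of the unit interval. -/
def pt1 : unitI := ⟨1, by norm_num⟩

/-!
Every orbit of `tentMap` is absorbed by the set `{0, 1}` of fixed points: `0` is fixed and from
any `x > 0` the orbit `min (2ⁿ x) 1` reaches `1`. By Poincaré recurrence, almost every point
outside an absorbing set would return outside it infinitely often, so every invariant
probability measure lives on `{0, 1}`. Hence the essential set is `{0, 1}` (Dirac masses at the
fixed points are invariant), and an ergodic measure, for which the invariant set `{0}` has measure
`0` or `1`, is `δ₀` or `δ₁`.
-/

open Function Set Filter

namespace MeasureTheory

variable {X : Type*} [MeasurableSpace X] {f : X → X} {μ : Measure X} {t : Set X}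

theorem Conservative.ae_mem_of_mapsTo_of_exists_iterate_mem (hf : Conservative f μ)
    (ht : NullMeasurableSet t μ) (hmaps : MapsTo f t t) (hreach : ∀ x, ∃ n, f^[n] x ∈ t) :
    ∀ᵐ x ∂μ, x ∈ t := by
  filter_upwards [hf.ae_mem_imp_frequently_image_mem ht.compl] with x hrecur
  by_contra hxt
  obtain ⟨n, hn⟩ := hreach x
  have hstay : ∀ᶠ m in atTop, f^[m] x ∈ t := by
    filter_upwards [eventually_ge_atTop n] with m hm
    rw [← Nat.sub_add_cancel hm, iterate_add_apply]
    exact hmaps.iterate _ hn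
  obtain ⟨m, hout, hin⟩ := ((hrecur hxt).and_eventually hstay).exists
  exact hout hin

theorem Measure.eq_dirac_of_ae_eq [IsProbabilityMeasure μ] {a : X} (h : ∀ᵐ x ∂μ, x = a) :
    μ = Measure.dirac a := by
  simpa using (ProbabilityTheory.hasLaw_dirac_of_ae_eq (X := id) h).map_eq

variable [TopologicalSpace X]

theorem mem_essentialSet_of_isFixedPt [OpensMeasurableSpace X] (hf : Measurable f) {x : X}
    (hx : IsFixedPt f x) : x ∈ essentialSet f := by
  intro V hV hxV
  refine ⟨Measure.dirac x, inferInstance, by rw [Measure.map_dirac' hf, hx], ?_⟩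
  simp [Measure.dirac_apply_of_mem hxV]

theorem essentialSet_subset_of_ae_mem (ht : IsClosed t)
    (h : ∀ ν : Measure X, IsProbabilityMeasure ν → ν.map f = ν → ∀ᵐ x ∂ν, x ∈ t) :
    essentialSet f ⊆ t := by
  intro x hx
  by_contra hxt
  obtain ⟨ν, hν, hinv, hpos⟩ := hx tᶜ ht.isOpen_compl hxt
  exact hpos.ne' (ae_iff.mp (h ν hν hinv))

end MeasureTheory

open MeasureTheory

theorem continuous_tentMap : Continuous tentMap :=
  ((continuous_const.mul continuous_subtype_val).min continuous_const).subtype_mk _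

theorem measurable_tentMap : Measurable tentMap := continuous_tentMap.measurable

theorem coe_tentMap_iterate (n : ℕ) (x : unitI) :
    (tentMap^[n] x : ℝ) = min (2 ^ n * (x : ℝ)) 1 := by
  induction n with
  | zero => simpa using x.2.2
  | succ n ih =>
    rw [iterate_succ_apply']
    change min (2 * (tentMap^[n] x : ℝ)) 1 = _
    rw [ih, mul_min_of_nonneg _ _ zero_le_two, min_assoc, pow_succ']
    norm_num [mul_assoc]

theorem tentMap_eq_pt0_iff {x : unitI} : tentMap x = pt0 ↔ x = pt0 := by
  rw [Subtype.ext_iff, Subtype.ext_iff]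
  change min (2 * (x : ℝ)) 1 = 0 ↔ (x : ℝ) = 0
  rcases le_total (2 * (x : ℝ)) 1 with h | h
  · rw [min_eq_left h]; constructor <;> intro <;> linarith
  · rw [min_eq_right h]; constructor <;> intro <;> linarith

theorem tentMap_eq_pt1_iff {x : unitI} : tentMap x = pt1 ↔ 1 / 2 ≤ (x : ℝ) := by
  rw [Subtype.ext_iff]
  change min (2 * (x : ℝ)) 1 = 1 ↔ _
  rw [min_eq_right_iff]
  constructor <;> intro <;> linarith

theorem isFixedPt_tentMap_pt0 : IsFixedPt tentMap pt0 := tentMap_eq_pt0_iff.mpr rfl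

theorem isFixedPt_tentMap_pt1 : IsFixedPt tentMap pt1 :=
  tentMap_eq_pt1_iff.mpr (by norm_num [pt1])

theorem exists_tentMap_iterate_eq_pt1 {x : unitI} (hx : x ≠ pt0) :
    ∃ n, tentMap^[n] x = pt1 := by
  have hpos : 0 < (x : ℝ) := x.2.1.lt_of_ne fun h => hx (Subtype.ext h.symm)
  obtain ⟨n, hn⟩ := pow_unbounded_of_one_lt (x : ℝ)⁻¹ one_lt_two
  refine ⟨n, Subtype.ext ?_⟩
  rw [inv_lt_iff_one_lt_mul₀ hpos] at hn
  rw [coe_tentMap_iterate]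
  exact min_eq_right hn.le

theorem ae_mem_pt0_pt1 (μ : Measure unitI) [IsFiniteMeasure μ] (hμ : μ.map tentMap = μ) :
    ∀ᵐ x ∂μ, x ∈ ({pt0, pt1} : Set unitI) := by
  have hmaps : MapsTo tentMap {pt0, pt1} {pt0, pt1} := by
    rintro x (rfl | rfl)
    exacts [.inl isFixedPt_tentMap_pt0, .inr isFixedPt_tentMap_pt1]
  have hreach (x : unitI) : ∃ n, tentMap^[n] x ∈ ({pt0, pt1} : Set unitI) := by
    by_cases hx : x = pt0
    · exact ⟨0, .inl hx⟩
    · obtain ⟨n, hn⟩ := exists_tentMap_iterate_eq_pt1 hx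
      exact ⟨n, .inr hn⟩
  have hconservative : Conservative tentMap μ :=
    MeasurePreserving.conservative ⟨measurable_tentMap, hμ⟩
  exact hconservative.ae_mem_of_mapsTo_of_exists_iterate_mem
    ({pt0, pt1} : Set unitI).toFinite.measurableSet.nullMeasurableSet hmaps hreach

theorem essentialSet_tentMap : essentialSet tentMap = {pt0, pt1} := by
  refine (essentialSet_subset_of_ae_mem ({pt0, pt1} : Set unitI).toFinite.isClosed
    fun μ _ hμ => ae_mem_pt0_pt1 μ hμ).antisymm ?_
  rintro x (rfl | rfl)
  exacts [mem_essentialSet_of_isFixedPt measurable_tentMap isFixedPt_tentMap_pt0,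
    mem_essentialSet_of_isFixedPt measurable_tentMap isFixedPt_tentMap_pt1]

theorem preimage_tentMap_pt0_pt1 :
    tentMap ⁻¹' {pt0, pt1} = {pt0} ∪ {x : unitI | 1 / 2 ≤ x.1} := by
  ext x
  simp [tentMap_eq_pt0_iff, tentMap_eq_pt1_iff]

theorem eq_dirac_pt0_or_pt1_of_ergodic (μ : Measure unitI) [IsProbabilityMeasure μ]
    (hμ : Ergodic tentMap μ) : μ = Measure.dirac pt0 ∨ μ = Measure.dirac pt1 := by
  have hsupp := ae_mem_pt0_pt1 μ hμ.map_eq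
  have hinv : tentMap ⁻¹' {pt0} = {pt0} := by ext; exact tentMap_eq_pt0_iff
  rcases hμ.measure_self_or_compl_eq_zero (measurableSet_singleton pt0) hinv with h | h
  · right
    refine Measure.eq_dirac_of_ae_eq ?_
    filter_upwards [hsupp, measure_eq_zero_iff_ae_notMem.mp h] with x hx hx0
    exact (mem_insert_iff.mp hx).resolve_left hx0
  · left
    refine Measure.eq_dirac_of_ae_eq ?_
    filter_upwards [measure_eq_zero_iff_ae_notMem.mp h] with x hx
    simpa using hx

theorem tentMap_essentialSet :
    (∀ μ : Measure unitI, IsProbabilityMeasure μ → Ergodic tentMap μ →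
      μ = Measure.dirac pt0 ∨ μ = Measure.dirac pt1) ∧
    essentialSet tentMap = {pt0, pt1} ∧
    tentMap ⁻¹' (essentialSet tentMap) = {pt0} ∪ {x : unitI | 1 / 2 ≤ x.1} ∧
    tentMap ⁻¹' (essentialSet tentMap) ≠ essentialSet tentMap := by
  rw [essentialSet_tentMap, preimage_tentMap_pt0_pt1]
  refine ⟨fun μ _ hμ => eq_dirac_pt0_or_pt1_of_ergodic μ hμ, rfl, rfl, fun h => ?_⟩
  have half_mem : (⟨1 / 2, by norm_num⟩ : unitI) ∈ ({pt0} ∪ {x : unitI | 1 / 2 ≤ x.1}) :=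
    .inr (show (1 : ℝ) / 2 ≤ 1 / 2 from le_rfl)
  rw [h] at half_mem
  rcases half_mem with heq | heq <;> norm_num [Subtype.ext_iff, pt0, pt1] at heq
end
end

section
/- Let X be a compact metric space and α: X → X continuous with essential set X_α. Suppose there exists ε₀ > 0 such that whenever d(x, α(y)) < ε₀ with x, y ∈ X_α, there exists z ∈ α^{-1}(x) ∩ X_α with d(z,y) ≤ d(x, α(y)). Then for every finite ε₀-net F of X_α and every n ∈ ℕ, the set α^{-n}(F) ∩ X_α is (n, ε₀)-spanning for X_α. -/
open MeasureTheory Set Function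

theorem mapsTo_essentialSet {X : Type*} [TopologicalSpace X] [MeasurableSpace X]
    [BorelSpace X] {α : X → X} (hα : Continuous α) :
    MapsTo α (essentialSet α) (essentialSet α) := by
  intro y hy V hV hyV
  obtain ⟨μ, hprob, hinv, hpos⟩ := hy (α ⁻¹' V) (hV.preimage hα) hyV
  refine ⟨μ, hprob, hinv, ?_⟩
  rwa [← hinv, Measure.map_apply hα.measurable hV.measurableSet]

/-- Lifting the net point `x` shadowing `α y` along `α` gives a point shadowing `y` one step
longer; starting from the net itself, induction yields shadowing orbits of every length. -/
theorem exists_iterate_mem_of_lift {X : Type*} [PseudoMetricSpace X] {α : X → X} {S F : Set X}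
    {ε : ℝ} (hS : MapsTo α S S)
    (hlift : ∀ x ∈ S, ∀ y ∈ S, dist x (α y) < ε →
      ∃ z : X, α z = x ∧ z ∈ S ∧ dist z y ≤ dist x (α y))
    (hFS : F ⊆ S) (hnet : ∀ y ∈ S, ∃ x ∈ F, dist y x < ε) (n : ℕ) :
    ∀ y ∈ S, ∃ z ∈ S, α^[n] z ∈ F ∧ ∀ i ≤ n, dist (α^[i] z) (α^[i] y) < ε := by
  induction n with
  | zero =>
    intro y hy
    obtain ⟨x, hxF, hxy⟩ := hnet y hy
    refine ⟨x, hFS hxF, hxF, fun i hi => ?_⟩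
    rw [Nat.le_zero.mp hi, iterate_zero_apply, iterate_zero_apply, dist_comm]
    exact hxy
  | succ m ih =>
    intro y hy
    obtain ⟨x, hxS, hxF, hxy⟩ := ih (α y) (hS hy)
    have hx : dist x (α y) < ε := by simpa using hxy 0 m.zero_le
    obtain ⟨z, rfl, hzS, hzy⟩ := hlift x hxS y hy hx
    refine ⟨z, hzS, by rwa [iterate_succ_apply], fun i hi => ?_⟩
    cases i with
    | zero => simpa using hzy.trans_lt hx
    | succ j =>
      rw [iterate_succ_apply, iterate_succ_apply]
      exact hxy j (Nat.succ_le_succ_iff.mp hi)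

theorem preimage_of_net_spanning_general
    {X : Type*} [MetricSpace X]
    [MeasurableSpace X] [BorelSpace X]
    (α : X → X) (hα : Continuous α)
    (ε₀ : ℝ)
    (hlift : ∀ x ∈ essentialSet α, ∀ y ∈ essentialSet α, dist x (α y) < ε₀ →
      ∃ z : X, α z = x ∧ z ∈ essentialSet α ∧ dist z y ≤ dist x (α y))
    (F : Finset X) (hFsub : ↑F ⊆ essentialSet α)
    (hnet : ∀ y ∈ essentialSet α, ∃ x ∈ F, dist y x < ε₀)
    (n : ℕ) :
    ∀ y ∈ essentialSet α, ∃ z : X, z ∈ α^[n] ⁻¹' ↑F ∧ z ∈ essentialSet α ∧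
      ∀ i < n, dist (α^[i] z) (α^[i] y) < ε₀ := by
  intro y hy
  obtain ⟨z, hzE, hzF, hzy⟩ :=
    exists_iterate_mem_of_lift (mapsTo_essentialSet hα) hlift hFsub hnet n y hy
  exact ⟨z, hzF, hzE, fun i hi => hzy i hi.le⟩

theorem preimage_of_net_spanning
    {X : Type*} [MetricSpace X] [CompactSpace X]
    [MeasurableSpace X] [BorelSpace X]
    (α : X → X) (hα : Continuous α)
    (ε₀ : ℝ) (hε₀ : 0 < ε₀)
    (hlift : ∀ x ∈ essentialSet α, ∀ y ∈ essentialSet α, dist x (α y) < ε₀ →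
      ∃ z : X, α z = x ∧ z ∈ essentialSet α ∧ dist z y ≤ dist x (α y))
    (F : Finset X) (hFsub : ↑F ⊆ essentialSet α)
    (hnet : ∀ y ∈ essentialSet α, ∃ x ∈ F, dist y x < ε₀)
    (n : ℕ) :
    ∀ y ∈ essentialSet α, ∃ z : X, z ∈ α^[n] ⁻¹' ↑F ∧ z ∈ essentialSet α ∧
      ∀ i < n, dist (α^[i] z) (α^[i] y) < ε₀ :=
  preimage_of_net_spanning_general α hα ε₀ hlift F hFsub hnet n
end
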